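/- Let φ be Schwartz on ℂ^×. Then for each m ∈ ℤ the Mellin transform 𝓜_m φ(s) converges absolutely for every s ∈ ℂ and defines an entire function of s; moreover, for all α, A ∈ ℕ and all reals a ≤ b there exists a constant C > 0 such that |𝓜_m φ(s)| ≤ C·(1 + |m|)^{−A}·(1 + |Im s|)^{−α} for all m ∈ ℤ and all s ∈ ℂ with a ≤ Re s ≤ b. -/

import Mathlib

open MeasureTheory Set Filter Asymptotics intervalIntegral
open scoped Real Topology

def SchwartzCx (φ : ℂ → ℂ) : Prop :=
  ContDiffOn ℝ (⊤ : ℕ∞) φ {(0 : ℂ)}ᶜ ∧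
    ∀ (α γ : ℕ) (β : ℤ), ∃ C : ℝ, ∀ (x θ : ℝ), 0 < x →
      x ^ β * ‖iteratedDeriv α
        (fun x' : ℝ => iteratedDeriv γ
          (fun θ' : ℝ => φ ((x' : ℂ) * Complex.exp ((θ' : ℂ) * Complex.I))) θ) x‖ ≤ C

/-- The Mellin transform of order `m` over `ℂ^×`:
`𝓜_m φ(s) = 2∫_0^∞ ∫_0^{2π} φ(x e^{iθ}) e^{imθ} dθ · x^{s−1} dx`. -/
noncomputable def mellinCx (φ : ℂ → ℂ) (m : ℤ) (s : ℂ) : ℂ :=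
  2 * ∫ x in Set.Ioi (0 : ℝ),
      (∫ θ in (0 : ℝ)..(2 * π),
        φ ((x : ℂ) * Complex.exp ((θ : ℂ) * Complex.I)) *
          Complex.exp ((m : ℂ) * (θ : ℂ) * Complex.I)) * (x : ℂ) ^ (s - 1)


namespace Stmt7

noncomputable def Phi (φ : ℂ → ℂ) (γ : ℕ) (x θ : ℝ) : ℂ :=
  iteratedDeriv γ (fun θ' : ℝ => φ ((x : ℂ) * Complex.exp ((θ' : ℂ) * Complex.I))) θ

noncomputable def Dx (φ : ℂ → ℂ) (k γ : ℕ) (x θ : ℝ) : ℂ :=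
  iteratedDeriv k (fun x' : ℝ => Phi φ γ x' θ) x

/-- parametric deriv in second variable is smooth -/
lemma contDiffAt_deriv_snd {F : ℝ × ℝ → ℂ} {S : Set (ℝ × ℝ)} (hS : IsOpen S)
    (hF : ∀ p ∈ S, ContDiffAt ℝ (⊤ : ℕ∞) F p) {p : ℝ × ℝ} (hp : p ∈ S) :
    ContDiffAt ℝ (⊤ : ℕ∞) (fun q : ℝ × ℝ => deriv (fun y => F (q.1, y)) q.2) p := by
  have h1 : ContDiffAt ℝ (⊤ : ℕ∞) (Function.uncurry fun (q : ℝ × ℝ) (y : ℝ) => F (q.1, y)) (p, p.2) := by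
    have : (Function.uncurry fun (q : ℝ × ℝ) (y : ℝ) => F (q.1, y))
        = F ∘ (fun r : (ℝ × ℝ) × ℝ => (r.1.1, r.2)) := rfl
    rw [this]
    exact (hF p hp).comp (x := ((p, p.2) : (ℝ × ℝ) × ℝ))
      (by simpa using ((contDiff_fst.fst.prodMk contDiff_snd).contDiffAt (x := ((p, p.2)))))
  have h2 : ContDiffAt ℝ (⊤ : ℕ∞) (fun q : ℝ × ℝ =>
      fderiv ℝ (fun y => F (q.1, y)) q.2) p :=
    h1.fderiv (contDiffAt_snd) (by simp)
  have h3 : ContDiffAt ℝ (⊤ : ℕ∞) (fun q : ℝ × ℝ =>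
      fderiv ℝ (fun y => F (q.1, y)) q.2 (1 : ℝ)) p := h2.clm_apply contDiffAt_const
  refine h3.congr_of_eventuallyEq ?_
  filter_upwards with q
  rw [fderiv_apply_one_eq_deriv]

/-- parametric deriv in first variable is smooth -/
lemma contDiffAt_deriv_fst {F : ℝ × ℝ → ℂ} {S : Set (ℝ × ℝ)} (hS : IsOpen S)
    (hF : ∀ p ∈ S, ContDiffAt ℝ (⊤ : ℕ∞) F p) {p : ℝ × ℝ} (hp : p ∈ S) :
    ContDiffAt ℝ (⊤ : ℕ∞) (fun q : ℝ × ℝ => deriv (fun y => F (y, q.2)) q.1) p := by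
  have h1 : ContDiffAt ℝ (⊤ : ℕ∞) (Function.uncurry fun (q : ℝ × ℝ) (y : ℝ) => F (y, q.2)) (p, p.1) := by
    have : (Function.uncurry fun (q : ℝ × ℝ) (y : ℝ) => F (y, q.2))
        = F ∘ (fun r : (ℝ × ℝ) × ℝ => (r.2, r.1.2)) := rfl
    rw [this]
    exact (hF p hp).comp (x := ((p, p.1) : (ℝ × ℝ) × ℝ))
      (by simpa using ((contDiff_snd.prodMk contDiff_fst.snd).contDiffAt (x := ((p, p.1)))))
  have h2 : ContDiffAt ℝ (⊤ : ℕ∞) (fun q : ℝ × ℝ =>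
      fderiv ℝ (fun y => F (y, q.2)) q.1) p :=
    h1.fderiv (contDiffAt_fst) (by simp)
  have h3 : ContDiffAt ℝ (⊤ : ℕ∞) (fun q : ℝ × ℝ =>
      fderiv ℝ (fun y => F (y, q.2)) q.1 (1 : ℝ)) p := h2.clm_apply contDiffAt_const
  refine h3.congr_of_eventuallyEq ?_
  filter_upwards with q
  rw [fderiv_apply_one_eq_deriv]

lemma isOpenS : IsOpen {p : ℝ × ℝ | 0 < p.1} := isOpen_lt continuous_const continuous_fst

lemma phi_smooth {φ : ℂ → ℂ} (hφ : SchwartzCx φ) (γ : ℕ) :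
    ∀ p : ℝ × ℝ, 0 < p.1 → ContDiffAt ℝ (⊤ : ℕ∞) (fun q : ℝ × ℝ => Phi φ γ q.1 q.2) p := by
  induction γ with
  | zero =>
    intro p hp
    have heq : (fun q : ℝ × ℝ => Phi φ 0 q.1 q.2)
        = fun q : ℝ × ℝ => φ ((q.1 : ℂ) * Complex.exp ((q.2 : ℂ) * Complex.I)) := by
      funext q; simp [Phi]
    rw [heq]
    have hmap : ContDiff ℝ (⊤ : ℕ∞) (fun q : ℝ × ℝ => (q.1 : ℂ) * Complex.exp ((q.2 : ℂ) * Complex.I)) := by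
      apply ContDiff.mul
      · exact Complex.ofRealCLM.contDiff.comp contDiff_fst
      · exact Complex.contDiff_exp.comp ((Complex.ofRealCLM.contDiff.comp contDiff_snd).mul
          contDiff_const)
    have hne : (p.1 : ℂ) * Complex.exp ((p.2 : ℂ) * Complex.I) ≠ 0 :=
      mul_ne_zero (by exact_mod_cast hp.ne') (Complex.exp_ne_zero _)
    have hφat : ContDiffAt ℝ (⊤ : ℕ∞) φ ((p.1 : ℂ) * Complex.exp ((p.2 : ℂ) * Complex.I)) :=
      (hφ.1.contDiffAt (isOpen_compl_singleton.mem_nhds hne))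
    exact hφat.comp p hmap.contDiffAt
  | succ γ ih =>
    intro p hp
    have heq : (fun q : ℝ × ℝ => Phi φ (γ + 1) q.1 q.2)
        = fun q : ℝ × ℝ => deriv (fun y => Phi φ γ q.1 y) q.2 := by
      funext q
      rw [Phi, iteratedDeriv_succ]
      rfl
    rw [heq]
    exact contDiffAt_deriv_snd isOpenS (fun q hq => ih q hq) hp

lemma dx_smooth {φ : ℂ → ℂ} (hφ : SchwartzCx φ) (k γ : ℕ) :
    ∀ p : ℝ × ℝ, 0 < p.1 → ContDiffAt ℝ (⊤ : ℕ∞) (fun q : ℝ × ℝ => Dx φ k γ q.1 q.2) p := by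
  induction k with
  | zero =>
    intro p hp
    have heq : (fun q : ℝ × ℝ => Dx φ 0 γ q.1 q.2) = fun q : ℝ × ℝ => Phi φ γ q.1 q.2 := by
      funext q; simp [Dx]
    rw [heq]; exact phi_smooth hφ γ p hp
  | succ k ih =>
    intro p hp
    have heq : (fun q : ℝ × ℝ => Dx φ (k + 1) γ q.1 q.2)
        = fun q : ℝ × ℝ => deriv (fun y => Dx φ k γ y q.2) q.1 := by
      funext q
      rw [Dx, iteratedDeriv_succ]
      rfl
    rw [heq]
    exact contDiffAt_deriv_fst isOpenS (fun q hq => ih q hq) hp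


lemma dx_xslice_smooth {φ : ℂ → ℂ} (hφ : SchwartzCx φ) (k γ : ℕ) (θ : ℝ) {x : ℝ} (hx : 0 < x) :
    ContDiffAt ℝ (⊤ : ℕ∞) (fun x' : ℝ => Dx φ k γ x' θ) x := by
  have := (dx_smooth hφ k γ (x, θ) hx).comp (x := x)
    ((contDiff_id.prodMk contDiff_const).contDiffAt (x := x))
  exact this

lemma dx_hasDerivAt {φ : ℂ → ℂ} (hφ : SchwartzCx φ) (k γ : ℕ) (θ : ℝ) {x : ℝ} (hx : 0 < x) :
    HasDerivAt (fun x' : ℝ => Dx φ k γ x' θ) (Dx φ (k + 1) γ x θ) x := by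
  have hd : DifferentiableAt ℝ (fun x' : ℝ => Dx φ k γ x' θ) x :=
    (dx_xslice_smooth hφ k γ θ hx).differentiableAt (by simp)
  have := hd.hasDerivAt
  have heq : deriv (fun x' : ℝ => Dx φ k γ x' θ) x = Dx φ (k + 1) γ x θ := by
    rw [Dx, iteratedDeriv_succ]; rfl
  rwa [heq] at this

lemma dx_theta_cont {φ : ℂ → ℂ} (hφ : SchwartzCx φ) (k γ : ℕ) {x : ℝ} (hx : 0 < x) :
    Continuous (fun θ : ℝ => Dx φ k γ x θ) := by
  rw [continuous_iff_continuousAt]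
  intro θ
  have := (dx_smooth hφ k γ (x, θ) hx).comp (x := θ)
    ((contDiff_const.prodMk contDiff_id).contDiffAt (x := θ))
  exact this.continuousAt

lemma phi_theta_hasDerivAt {φ : ℂ → ℂ} (hφ : SchwartzCx φ) (γ : ℕ) {x : ℝ} (hx : 0 < x) (θ : ℝ) :
    HasDerivAt (fun θ' : ℝ => Phi φ γ x θ') (Phi φ (γ + 1) x θ) θ := by
  have hs : ContDiffAt ℝ (⊤ : ℕ∞) (fun θ' : ℝ => Phi φ γ x θ') θ := by
    have := (phi_smooth hφ γ (x, θ) hx).comp (x := θ)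
      ((contDiff_const.prodMk contDiff_id).contDiffAt (x := θ))
    exact this
  have hd : DifferentiableAt ℝ (fun θ' : ℝ => Phi φ γ x θ') θ :=
    hs.differentiableAt (by simp)
  have := hd.hasDerivAt
  have heq : deriv (fun θ' : ℝ => Phi φ γ x θ') θ = Phi φ (γ + 1) x θ := by
    rw [Phi, iteratedDeriv_succ]; rfl
  rwa [heq] at this

lemma phi_periodic (φ : ℂ → ℂ) (γ : ℕ) (x : ℝ) :
    Function.Periodic (fun θ : ℝ => Phi φ γ x θ) (2 * π) := by
  induction γ with
  | zero =>
    intro θ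
    simp only [Phi, iteratedDeriv_zero]
    congr 1
    push_cast
    rw [add_mul, Complex.exp_add]
    simp [Complex.exp_two_pi_mul_I]
  | succ γ ih =>
    have heq : (fun θ : ℝ => Phi φ (γ + 1) x θ) = deriv (fun θ : ℝ => Phi φ γ x θ) := by
      funext θ; rw [Phi, iteratedDeriv_succ]; rfl
    rw [heq]
    intro θ
    have : (fun y : ℝ => Phi φ γ x (y + 2 * π)) = fun y : ℝ => Phi φ γ x y := funext fun y => ih y
    calc deriv (fun θ : ℝ => Phi φ γ x θ) (θ + 2 * π)
        = deriv (fun y : ℝ => Phi φ γ x (y + 2 * π)) θ := (deriv_comp_add_const _ _ _).symm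
      _ = deriv (fun θ : ℝ => Phi φ γ x θ) θ := by rw [this]

/-- The bound from the Schwartz condition, in convenient form. -/
lemma dx_bound {φ : ℂ → ℂ} (hφ : SchwartzCx φ) (k γ : ℕ) (β : ℤ) :
    ∃ C : ℝ, 0 ≤ C ∧ ∀ x θ : ℝ, 0 < x → ‖Dx φ k γ x θ‖ ≤ C * x ^ (-β) := by
  obtain ⟨C, hC⟩ := hφ.2 k γ β
  refine ⟨max C 0, le_max_right _ _, fun x θ hx => ?_⟩
  have h1 := hC x θ hx
  have hxβ : (0:ℝ) < x ^ β := zpow_pos hx β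
  have : ‖Dx φ k γ x θ‖ ≤ C / x ^ β := by
    rw [le_div_iff₀ hxβ]
    calc ‖Dx φ k γ x θ‖ * x ^ β = x ^ β * ‖Dx φ k γ x θ‖ := mul_comm _ _
      _ ≤ C := h1
  refine this.trans ?_
  rw [div_eq_mul_inv, ← zpow_neg]
  exact mul_le_mul_of_nonneg_right (le_max_left _ _) (zpow_pos hx (-β)).le


noncomputable def g (φ : ℂ → ℂ) (γ : ℕ) (m : ℤ) (k : ℕ) (x : ℝ) : ℂ :=
  ∫ θ in (0:ℝ)..(2 * π), Dx φ k γ x θ * Complex.exp ((m : ℂ) * (θ : ℂ) * Complex.I)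

lemma g_bound {φ : ℂ → ℂ} (hφ : SchwartzCx φ) (k γ : ℕ) (β : ℤ) :
    ∃ C : ℝ, 0 ≤ C ∧ ∀ (m : ℤ) (x : ℝ), 0 < x → ‖g φ γ m k x‖ ≤ C * x ^ (-β) := by
  obtain ⟨C, hC0, hC⟩ := dx_bound hφ k γ β
  refine ⟨2 * π * C, mul_nonneg (by positivity) hC0, fun m x hx => ?_⟩
  have : ‖g φ γ m k x‖ ≤ C * x ^ (-β) * |2 * π - 0| := by
    apply intervalIntegral.norm_integral_le_of_norm_le_const
    intro θ hθ
    rw [norm_mul]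
    have h1 : ‖Dx φ k γ x θ‖ ≤ C * x ^ (-β) := hC x θ hx
    have h2 : ‖Complex.exp ((m : ℂ) * (θ : ℂ) * Complex.I)‖ = 1 := by
      rw [Complex.norm_exp]
      simp [Complex.mul_I_re]
    rw [h2, mul_one]
    exact h1
  refine this.trans (le_of_eq ?_)
  rw [abs_of_nonneg (by simp; positivity : (0:ℝ) ≤ 2 * π - 0)]
  ring

lemma exp_m_theta_hasDerivAt (m : ℤ) (θ : ℝ) :
    HasDerivAt (fun θ' : ℝ => Complex.exp ((m : ℂ) * (θ' : ℂ) * Complex.I))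
      ((m : ℂ) * Complex.I * Complex.exp ((m : ℂ) * (θ : ℂ) * Complex.I)) θ := by
  have h0 : HasDerivAt (fun θ' : ℝ => ((θ' : ℂ))) 1 θ := Complex.ofRealCLM.hasDerivAt
  have h1 : HasDerivAt (fun θ' : ℝ => (m : ℂ) * (θ' : ℂ) * Complex.I) ((m : ℂ) * Complex.I) θ := by
    have := (h0.const_mul ((m : ℂ))).mul_const Complex.I
    simpa using this
  simpa [mul_comm] using h1.cexp

lemma g_cont {φ : ℂ → ℂ} (hφ : SchwartzCx φ) (k γ : ℕ) (m : ℤ) {x : ℝ} (hx : 0 < x) :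
    Continuous fun θ : ℝ => Dx φ k γ x θ * Complex.exp ((m : ℂ) * (θ : ℂ) * Complex.I) := by
  apply (dx_theta_cont hφ k γ hx).mul
  exact Complex.continuous_exp.comp (by continuity)

/-- Differentiation under the integral sign. -/
lemma g_hasDerivAt {φ : ℂ → ℂ} (hφ : SchwartzCx φ) (γ : ℕ) (m : ℤ) (k : ℕ) {x : ℝ} (hx : 0 < x) :
    HasDerivAt (g φ γ m k) (g φ γ m (k + 1) x) x := by
  obtain ⟨C, hC0, hC⟩ := dx_bound hφ (k + 1) γ 0
  have hball : ∀ y ∈ Metric.ball x (x / 2), 0 < y := by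
    intro y hy
    rw [Metric.mem_ball, Real.dist_eq, abs_lt] at hy
    linarith [hy.1]
  have := intervalIntegral.hasDerivAt_integral_of_dominated_loc_of_deriv_le
    (F := fun x' θ => Dx φ k γ x' θ * Complex.exp ((m : ℂ) * (θ : ℂ) * Complex.I))
    (F' := fun x' θ => Dx φ (k + 1) γ x' θ * Complex.exp ((m : ℂ) * (θ : ℂ) * Complex.I))
    (μ := volume) (a := 0) (b := 2 * π) (x₀ := x)
    (bound := fun _ => C) (Metric.ball_mem_nhds x (half_pos hx)) ?_ ?_ ?_ ?_ ?_ ?_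
  · exact this.2
  · filter_upwards [eventually_nhds_iff.mpr ⟨Ioi 0, fun y hy => hy, isOpen_Ioi, hx⟩] with y hy
    exact ((g_cont hφ k γ m hy).aestronglyMeasurable).restrict
  · exact (g_cont hφ k γ m hx).intervalIntegrable _ _
  · exact ((g_cont hφ (k + 1) γ m hx).aestronglyMeasurable).restrict
  · filter_upwards with θ _ y hy
    have hy0 : 0 < y := hball y hy
    have := hC y θ hy0
    rw [norm_mul]
    have h2 : ‖Complex.exp ((m : ℂ) * (θ : ℂ) * Complex.I)‖ = 1 := by
      rw [Complex.norm_exp]; simp [Complex.mul_I_re]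
    rw [h2, mul_one]
    simpa using this
  · exact intervalIntegrable_const
  · filter_upwards with θ _ y hy
    exact (dx_hasDerivAt hφ k γ θ (hball y hy)).mul_const _

/-- Integration by parts in θ. -/
lemma g_theta_ibp {φ : ℂ → ℂ} (hφ : SchwartzCx φ) (γ : ℕ) (m : ℤ) {x : ℝ} (hx : 0 < x) :
    g φ (γ + 1) m 0 x = -((m : ℂ) * Complex.I) * g φ γ m 0 x := by
  have key : ∫ θ in (0:ℝ)..(2 * π),
      (Phi φ (γ + 1) x θ * Complex.exp ((m : ℂ) * (θ : ℂ) * Complex.I)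
        + Phi φ γ x θ * ((m : ℂ) * Complex.I * Complex.exp ((m : ℂ) * (θ : ℂ) * Complex.I)))
      = Phi φ γ x (2 * π) * Complex.exp ((m : ℂ) * ((2 * π : ℝ) : ℂ) * Complex.I)
        - Phi φ γ x 0 * Complex.exp ((m : ℂ) * ((0 : ℝ) : ℂ) * Complex.I) := by
    apply intervalIntegral.integral_eq_sub_of_hasDerivAt
      (f := fun θ : ℝ => Phi φ γ x θ * Complex.exp ((m : ℂ) * (θ : ℂ) * Complex.I))
    · intro θ _
      exact (phi_theta_hasDerivAt hφ γ hx θ).mul (exp_m_theta_hasDerivAt m θ)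
    · apply Continuous.intervalIntegrable
      have c1 : Continuous fun θ : ℝ => Phi φ (γ + 1) x θ := by
        have := dx_theta_cont hφ 0 (γ + 1) hx
        simpa [Dx] using this
      have c0 : Continuous fun θ : ℝ => Phi φ γ x θ := by
        have := dx_theta_cont hφ 0 γ hx
        simpa [Dx] using this
      apply Continuous.add
      · exact c1.mul (Complex.continuous_exp.comp (by continuity))
      · exact c0.mul (continuous_const.mul (Complex.continuous_exp.comp (by continuity)))
  have hper : Phi φ γ x (2 * π) = Phi φ γ x 0 := by
    have := phi_periodic φ γ x 0
    simpa using this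
  have hexp : Complex.exp ((m : ℂ) * ((2 * π : ℝ) : ℂ) * Complex.I) = 1 := by
    rw [← Complex.exp_int_mul_two_pi_mul_I m]
    congr 1
    push_cast
    ring
  rw [hper, hexp] at key
  simp only [Complex.ofReal_zero, mul_zero, zero_mul, Complex.exp_zero, mul_one] at key
  have hsplit : (∫ θ in (0:ℝ)..(2 * π),
      Phi φ (γ + 1) x θ * Complex.exp ((m : ℂ) * (θ : ℂ) * Complex.I))
      + ∫ θ in (0:ℝ)..(2 * π),
        Phi φ γ x θ * ((m : ℂ) * Complex.I * Complex.exp ((m : ℂ) * (θ : ℂ) * Complex.I)) = 0 := by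
    rw [← intervalIntegral.integral_add]
    · rw [key]; ring
    · apply Continuous.intervalIntegrable
      have c1 : Continuous fun θ : ℝ => Phi φ (γ + 1) x θ := by
        have := dx_theta_cont hφ 0 (γ + 1) hx
        simpa [Dx] using this
      exact c1.mul (Complex.continuous_exp.comp (by continuity))
    · apply Continuous.intervalIntegrable
      have c0 : Continuous fun θ : ℝ => Phi φ γ x θ := by
        have := dx_theta_cont hφ 0 γ hx
        simpa [Dx] using this
      exact c0.mul (continuous_const.mul (Complex.continuous_exp.comp (by continuity)))
  have h2 : ∫ θ in (0:ℝ)..(2 * π),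
      Phi φ γ x θ * ((m : ℂ) * Complex.I * Complex.exp ((m : ℂ) * (θ : ℂ) * Complex.I))
      = ((m : ℂ) * Complex.I) * ∫ θ in (0:ℝ)..(2 * π),
          Phi φ γ x θ * Complex.exp ((m : ℂ) * (θ : ℂ) * Complex.I) := by
    rw [← intervalIntegral.integral_const_mul]
    congr 1; funext θ; ring
  rw [h2] at hsplit
  have hg1 : g φ (γ + 1) m 0 x = ∫ θ in (0:ℝ)..(2 * π),
      Phi φ (γ + 1) x θ * Complex.exp ((m : ℂ) * (θ : ℂ) * Complex.I) := by
    simp [g, Dx]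
  have hg0 : g φ γ m 0 x = ∫ θ in (0:ℝ)..(2 * π),
      Phi φ γ x θ * Complex.exp ((m : ℂ) * (θ : ℂ) * Complex.I) := by
    simp [g, Dx]
  rw [hg1, hg0]
  linear_combination hsplit


lemma g_contOn {φ : ℂ → ℂ} (hφ : SchwartzCx φ) (γ : ℕ) (m : ℤ) (k : ℕ) :
    ContinuousOn (g φ γ m k) (Ioi 0) := fun x hx =>
  ((g_hasDerivAt hφ γ m k hx).continuousAt).continuousWithinAt

lemma g_locInt {φ : ℂ → ℂ} (hφ : SchwartzCx φ) (γ : ℕ) (m : ℤ) (k : ℕ) :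
    LocallyIntegrableOn (g φ γ m k) (Ioi 0) :=
  (g_contOn hφ γ m k).locallyIntegrableOn measurableSet_Ioi

lemma g_isBigO_top {φ : ℂ → ℂ} (hφ : SchwartzCx φ) (γ : ℕ) (m : ℤ) (k : ℕ) (r : ℝ) :
    (g φ γ m k) =O[atTop] (fun x : ℝ => x ^ (-r)) := by
  obtain ⟨C, hC0, hC⟩ := g_bound hφ k γ ⌈r⌉
  apply IsBigO.of_bound C
  filter_upwards [eventually_ge_atTop (1:ℝ)] with x hx1
  have hx : (0:ℝ) < x := lt_of_lt_of_le zero_lt_one hx1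
  have h1 : ‖g φ γ m k x‖ ≤ C * x ^ (-⌈r⌉ : ℤ) := hC m x hx
  have h2 : (x : ℝ) ^ (-⌈r⌉ : ℤ) ≤ x ^ (-r) := by
    rw [← Real.rpow_intCast x (-⌈r⌉)]
    apply Real.rpow_le_rpow_of_exponent_le hx1
    push_cast
    linarith [Int.le_ceil r]
  have h3 : ‖x ^ (-r)‖ = x ^ (-r) := Real.norm_of_nonneg (Real.rpow_nonneg hx.le _)
  rw [h3]
  exact h1.trans (by nlinarith)

lemma g_isBigO_zero {φ : ℂ → ℂ} (hφ : SchwartzCx φ) (γ : ℕ) (m : ℤ) (k : ℕ) (r : ℝ) :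
    (g φ γ m k) =O[𝓝[>] (0:ℝ)] (fun x : ℝ => x ^ (-r)) := by
  obtain ⟨C, hC0, hC⟩ := g_bound hφ k γ ⌊r⌋
  apply IsBigO.of_bound C
  filter_upwards [self_mem_nhdsWithin, Icc_mem_nhdsGT_of_mem
    (by constructor <;> norm_num : (0:ℝ) ∈ Ico 0 1)] with x hx hx1
  have hx0 : (0:ℝ) < x := hx
  have h1 : ‖g φ γ m k x‖ ≤ C * x ^ (-⌊r⌋ : ℤ) := hC m x hx0
  have h2 : (x : ℝ) ^ (-⌊r⌋ : ℤ) ≤ x ^ (-r) := by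
    rw [← Real.rpow_intCast x (-⌊r⌋)]
    apply Real.rpow_le_rpow_of_exponent_ge hx0 hx1.2
    push_cast
    linarith [Int.floor_le r]
  have h3 : ‖x ^ (-r)‖ = x ^ (-r) := Real.norm_of_nonneg (Real.rpow_nonneg hx0.le _)
  rw [h3]
  exact h1.trans (by nlinarith)

lemma g_mellinConv {φ : ℂ → ℂ} (hφ : SchwartzCx φ) (γ : ℕ) (m : ℤ) (k : ℕ) (s : ℂ) :
    MellinConvergent (g φ γ m k) s :=
  mellinConvergent_of_isBigO_rpow (g_locInt hφ γ m k)
    (g_isBigO_top hφ γ m k (s.re + 1)) (by linarith)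
    (g_isBigO_zero hφ γ m k (s.re - 1)) (by linarith)

lemma g_mellin_diff {φ : ℂ → ℂ} (hφ : SchwartzCx φ) (γ : ℕ) (m : ℤ) (k : ℕ) (s : ℂ) :
    DifferentiableAt ℂ (mellin (g φ γ m k)) s :=
  mellin_differentiableAt_of_isBigO_rpow (g_locInt hφ γ m k)
    (g_isBigO_top hφ γ m k (s.re + 1)) (by linarith)
    (g_isBigO_zero hφ γ m k (s.re - 1)) (by linarith)

lemma g_cpow_tendsto_zero_top {φ : ℂ → ℂ} (hφ : SchwartzCx φ) (γ : ℕ) (m : ℤ) (k : ℕ) (s : ℂ) :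
    Tendsto (fun x : ℝ => g φ γ m k x * ((x:ℂ) ^ s / s)) atTop (𝓝 0) := by
  obtain ⟨C, hC0, hC⟩ := g_bound hφ k γ (⌈s.re⌉ + 1)
  have hlim : Tendsto (fun x : ℝ => (C / ‖s‖) * x⁻¹) atTop (𝓝 0) := by
    simpa using tendsto_inv_atTop_zero.const_mul (C / ‖s‖)
  refine squeeze_zero_norm' ?_ hlim
  · filter_upwards [eventually_ge_atTop (1:ℝ)] with x hx1
    have hx : (0:ℝ) < x := lt_of_lt_of_le zero_lt_one hx1
    rw [norm_mul, norm_div, Complex.norm_cpow_eq_rpow_re_of_pos hx]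
    have h1 : ‖g φ γ m k x‖ ≤ C * x ^ (-(⌈s.re⌉ + 1) : ℤ) := hC m x hx
    have key : x ^ (-(⌈s.re⌉ + 1) : ℤ) * x ^ s.re ≤ x⁻¹ := by
      rw [← Real.rpow_intCast x, ← Real.rpow_add hx, ← Real.rpow_neg_one x]
      apply Real.rpow_le_rpow_of_exponent_le hx1
      push_cast
      linarith [Int.le_ceil s.re]
    calc ‖g φ γ m k x‖ * (x ^ s.re / ‖s‖)
        ≤ (C * x ^ (-(⌈s.re⌉ + 1) : ℤ)) * (x ^ s.re / ‖s‖) := by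
          apply mul_le_mul_of_nonneg_right h1
          positivity
      _ = (C / ‖s‖) * (x ^ (-(⌈s.re⌉ + 1) : ℤ) * x ^ s.re) := by ring
      _ ≤ (C / ‖s‖) * x⁻¹ := by
          apply mul_le_mul_of_nonneg_left key
          positivity

lemma g_cpow_tendsto_zero_bot {φ : ℂ → ℂ} (hφ : SchwartzCx φ) (γ : ℕ) (m : ℤ) (k : ℕ) (s : ℂ) :
    Tendsto (fun x : ℝ => g φ γ m k x * ((x:ℂ) ^ s / s)) (𝓝[>] (0:ℝ)) (𝓝 0) := by
  obtain ⟨C, hC0, hC⟩ := g_bound hφ k γ (⌊s.re⌋ - 1)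
  have hlim : Tendsto (fun x : ℝ => (C / ‖s‖) * x) (𝓝[>] (0:ℝ)) (𝓝 0) := by
    have : Tendsto (fun x : ℝ => (C / ‖s‖) * x) (𝓝[>] (0:ℝ)) (𝓝 ((C / ‖s‖) * 0)) :=
      (tendsto_id.const_mul _).mono_left nhdsWithin_le_nhds
    simpa using this
  refine squeeze_zero_norm' ?_ hlim
  · filter_upwards [self_mem_nhdsWithin, Icc_mem_nhdsGT_of_mem
      (by constructor <;> norm_num : (0:ℝ) ∈ Ico 0 1)] with x hx hx1
    have hx0 : (0:ℝ) < x := hx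
    rw [norm_mul, norm_div, Complex.norm_cpow_eq_rpow_re_of_pos hx0]
    have h1 : ‖g φ γ m k x‖ ≤ C * x ^ (-(⌊s.re⌋ - 1) : ℤ) := hC m x hx0
    have key : x ^ (-(⌊s.re⌋ - 1) : ℤ) * x ^ s.re ≤ x := by
      rw [← Real.rpow_intCast x, ← Real.rpow_add hx0]
      nth_rewrite 2 [← Real.rpow_one x]
      apply Real.rpow_le_rpow_of_exponent_ge hx0 hx1.2
      push_cast
      linarith [Int.floor_le s.re]
    calc ‖g φ γ m k x‖ * (x ^ s.re / ‖s‖)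
        ≤ (C * x ^ (-(⌊s.re⌋ - 1) : ℤ)) * (x ^ s.re / ‖s‖) := by
          apply mul_le_mul_of_nonneg_right h1
          positivity
      _ = (C / ‖s‖) * (x ^ (-(⌊s.re⌋ - 1) : ℤ) * x ^ s.re) := by ring
      _ ≤ (C / ‖s‖) * x := by
          apply mul_le_mul_of_nonneg_left key
          positivity

/-- Integration by parts for the Mellin transform. -/
lemma g_mellin_ibp {φ : ℂ → ℂ} (hφ : SchwartzCx φ) (γ : ℕ) (m : ℤ) (k : ℕ) {s : ℂ}
    (hs : s ≠ 0) :
    mellin (g φ γ m k) s = -(1 / s) * mellin (g φ γ m (k + 1)) (s + 1) := by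
  have hv : ∀ x ∈ Ioi (0:ℝ), HasDerivAt (fun x : ℝ => (x:ℂ) ^ s / s) ((x:ℂ) ^ (s - 1)) x := by
    intro x hx
    have := hasDerivAt_ofReal_cpow_const' (ne_of_gt hx) (by
      intro h
      apply hs
      have : s = -1 + 1 := by rw [← h]; ring
      simpa using this : s - 1 ≠ -1)
    have h2 : s - 1 + 1 = s := by ring
    rw [h2] at this
    exact this
  have hu : ∀ x ∈ Ioi (0:ℝ), HasDerivAt (g φ γ m k) (g φ γ m (k + 1) x) x :=
    fun x hx => g_hasDerivAt hφ γ m k hx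
  have huv' : IntegrableOn (g φ γ m k * fun x : ℝ => (x:ℂ) ^ (s - 1)) (Ioi 0) := by
    have := g_mellinConv hφ γ m k s
    apply this.congr_fun ?_ measurableSet_Ioi
    intro x _
    simp [smul_eq_mul, mul_comm]
  have hu'v : IntegrableOn ((g φ γ m (k + 1)) * fun x : ℝ => (x:ℂ) ^ s / s) (Ioi 0) := by
    have h := (g_mellinConv hφ γ m (k + 1) (s + 1)).div_const s
    apply h.congr_fun ?_ measurableSet_Ioi
    intro x _
    have h2 : (s + 1 - 1) = s := by ring
    simp only [smul_eq_mul, h2, Pi.mul_apply]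
    ring
  have key := MeasureTheory.integral_Ioi_mul_deriv_eq_deriv_mul hu hv huv' hu'v
    (g_cpow_tendsto_zero_bot hφ γ m k s) (g_cpow_tendsto_zero_top hφ γ m k s)
  have lhs : ∫ x in Ioi (0:ℝ), g φ γ m k x * (x:ℂ) ^ (s - 1) = mellin (g φ γ m k) s := by
    rw [mellin]
    apply setIntegral_congr_fun measurableSet_Ioi
    intro x _
    simp [smul_eq_mul, mul_comm]
  have rhs : ∫ x in Ioi (0:ℝ), g φ γ m (k + 1) x * ((x:ℂ) ^ s / s)
      = (1 / s) * mellin (g φ γ m (k + 1)) (s + 1) := by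
    calc ∫ x in Ioi (0:ℝ), g φ γ m (k + 1) x * ((x:ℂ) ^ s / s)
        = ∫ x in Ioi (0:ℝ), (1 / s) • ((x:ℂ) ^ (s + 1 - 1) • g φ γ m (k + 1) x) := by
          apply setIntegral_congr_fun measurableSet_Ioi
          intro x _
          have h2 : (s + 1 - 1) = s := by ring
          simp only [h2, smul_eq_mul]
          ring
      _ = (1 / s) • ∫ x in Ioi (0:ℝ), (x:ℂ) ^ (s + 1 - 1) • g φ γ m (k + 1) x :=
          MeasureTheory.integral_smul _ _
      _ = (1 / s) * mellin (g φ γ m (k + 1)) (s + 1) := by rw [mellin, smul_eq_mul]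
  rw [lhs, rhs] at key
  rw [key]
  ring


/-- Uniform bound for the Mellin transform on a vertical strip (uniform in `m`). -/
lemma g_mellin_strip {φ : ℂ → ℂ} (hφ : SchwartzCx φ) (γ k : ℕ) (a b : ℝ) (hab : a ≤ b) :
    ∃ C : ℝ, 0 ≤ C ∧ ∀ (m : ℤ) (s : ℂ), a ≤ s.re → s.re ≤ b →
      ‖mellin (g φ γ m k) s‖ ≤ C := by
  set β₁ : ℤ := ⌊a⌋ - 1 with hβ₁
  set β₂ : ℤ := ⌈b⌉ + 1 with hβ₂
  obtain ⟨C₁, hC₁0, hC₁⟩ := g_bound hφ k γ β₁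
  obtain ⟨C₂, hC₂0, hC₂⟩ := g_bound hφ k γ β₂
  have hp1 : (-1 : ℝ) < a - 1 - β₁ := by
    push_cast [hβ₁]
    linarith [Int.floor_le a]
  have hp2 : (b - 1 - (β₂:ℝ)) < -1 := by
    push_cast [hβ₂]
    linarith [Int.le_ceil b]
  have hW₁ : IntegrableOn (fun x : ℝ => C₁ * x ^ (a - 1 - (β₁:ℝ))) (Ioc (0:ℝ) 1) := by
    have := (intervalIntegral.intervalIntegrable_rpow' (a := 0) (b := 1) hp1)
    rw [intervalIntegrable_iff_integrableOn_Ioc_of_le zero_le_one] at this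
    exact this.const_mul _
  have hW₂ : IntegrableOn (fun x : ℝ => C₂ * x ^ (b - 1 - (β₂:ℝ))) (Ioi (1:ℝ)) :=
    (integrableOn_Ioi_rpow_of_lt hp2 zero_lt_one).const_mul _
  refine ⟨(∫ x in Ioc (0:ℝ) 1, C₁ * x ^ (a - 1 - (β₁:ℝ)))
    + ∫ x in Ioi (1:ℝ), C₂ * x ^ (b - 1 - (β₂:ℝ)), ?_, ?_⟩
  · apply add_nonneg
    · exact setIntegral_nonneg measurableSet_Ioc fun x hx =>
        mul_nonneg hC₁0 (Real.rpow_nonneg hx.1.le _)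
    · exact setIntegral_nonneg measurableSet_Ioi fun x hx =>
        mul_nonneg hC₂0 (Real.rpow_nonneg (lt_trans zero_lt_one hx).le _)
  intro m s hsa hsb
  set G := g φ γ m k with hG
  have hInt : IntegrableOn (fun x : ℝ => ‖(x:ℂ) ^ (s - 1) • G x‖) (Ioi (0:ℝ)) :=
    (g_mellinConv hφ γ m k s).norm
  have step1 : ‖mellin G s‖ ≤ ∫ x in Ioi (0:ℝ), ‖(x:ℂ) ^ (s - 1) • G x‖ :=
    MeasureTheory.norm_integral_le_integral_norm _
  have split : (∫ x in Ioi (0:ℝ), ‖(x:ℂ) ^ (s - 1) • G x‖)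
      = (∫ x in Ioc (0:ℝ) 1, ‖(x:ℂ) ^ (s - 1) • G x‖)
        + ∫ x in Ioi (1:ℝ), ‖(x:ℂ) ^ (s - 1) • G x‖ := by
    rw [← Ioc_union_Ioi_eq_Ioi (zero_le_one (α := ℝ)),
      MeasureTheory.setIntegral_union Ioc_disjoint_Ioi_same measurableSet_Ioi
        (hInt.mono_set (by rw [← Ioc_union_Ioi_eq_Ioi (zero_le_one (α := ℝ))]; exact subset_union_left))
        (hInt.mono_set (by rw [← Ioc_union_Ioi_eq_Ioi (zero_le_one (α := ℝ))]; exact subset_union_right))]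
  have norm_eq : ∀ x : ℝ, 0 < x → ‖(x:ℂ) ^ (s - 1) • G x‖ = x ^ (s.re - 1) * ‖G x‖ := by
    intro x hx
    rw [norm_smul, Complex.norm_cpow_eq_rpow_re_of_pos hx]
    simp [Complex.sub_re]
  have piece1 : (∫ x in Ioc (0:ℝ) 1, ‖(x:ℂ) ^ (s - 1) • G x‖)
      ≤ ∫ x in Ioc (0:ℝ) 1, C₁ * x ^ (a - 1 - (β₁:ℝ)) := by
    apply setIntegral_mono_on (hInt.mono_set
      (by rw [← Ioc_union_Ioi_eq_Ioi (zero_le_one (α := ℝ))]; exact subset_union_left))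
      hW₁ measurableSet_Ioc
    intro x hx
    rw [norm_eq x hx.1]
    have h1 : ‖G x‖ ≤ C₁ * x ^ (-β₁) := hC₁ m x hx.1
    calc x ^ (s.re - 1) * ‖G x‖ ≤ x ^ (s.re - 1) * (C₁ * x ^ (-β₁)) :=
          mul_le_mul_of_nonneg_left h1 (Real.rpow_nonneg hx.1.le _)
      _ = C₁ * (x ^ (s.re - 1) * x ^ ((-β₁ : ℤ) : ℝ)) := by
          rw [Real.rpow_intCast]
          ring
      _ = C₁ * x ^ (s.re - 1 - β₁) := by
          rw [← Real.rpow_add hx.1]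
          push_cast
          ring_nf
      _ ≤ C₁ * x ^ (a - 1 - (β₁:ℝ)) := by
          apply mul_le_mul_of_nonneg_left ?_ hC₁0
          apply Real.rpow_le_rpow_of_exponent_ge hx.1 hx.2
          linarith
  have piece2 : (∫ x in Ioi (1:ℝ), ‖(x:ℂ) ^ (s - 1) • G x‖)
      ≤ ∫ x in Ioi (1:ℝ), C₂ * x ^ (b - 1 - (β₂:ℝ)) := by
    apply setIntegral_mono_on (hInt.mono_set
      (by rw [← Ioc_union_Ioi_eq_Ioi (zero_le_one (α := ℝ))]; exact subset_union_right))
      hW₂ measurableSet_Ioi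
    intro x hx
    have hx0 : (0:ℝ) < x := lt_trans zero_lt_one hx
    rw [norm_eq x hx0]
    have h1 : ‖G x‖ ≤ C₂ * x ^ (-β₂) := hC₂ m x hx0
    calc x ^ (s.re - 1) * ‖G x‖ ≤ x ^ (s.re - 1) * (C₂ * x ^ (-β₂)) :=
          mul_le_mul_of_nonneg_left h1 (Real.rpow_nonneg hx0.le _)
      _ = C₂ * (x ^ (s.re - 1) * x ^ ((-β₂ : ℤ) : ℝ)) := by
          rw [Real.rpow_intCast]
          ring
      _ = C₂ * x ^ (s.re - 1 - β₂) := by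
          rw [← Real.rpow_add hx0]
          push_cast
          ring_nf
      _ ≤ C₂ * x ^ (b - 1 - (β₂:ℝ)) := by
          apply mul_le_mul_of_nonneg_left ?_ hC₂0
          apply Real.rpow_le_rpow_of_exponent_le (le_of_lt hx)
          linarith
  calc ‖mellin G s‖ ≤ _ := step1
    _ = _ := split
    _ ≤ _ := add_le_add piece1 piece2


/-- Decay in `|Im s|` via repeated integration by parts in `x`. -/
lemma g_mellin_decay {φ : ℂ → ℂ} (hφ : SchwartzCx φ) :
    ∀ (j γ k : ℕ) (a b : ℝ), a ≤ b → ∃ C : ℝ, 0 ≤ C ∧ ∀ (m : ℤ) (s : ℂ),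
      a ≤ s.re → s.re ≤ b → 1 ≤ |s.im| →
      ‖mellin (g φ γ m k) s‖ * |s.im| ^ j ≤ C := by
  intro j
  induction j with
  | zero =>
    intro γ k a b hab
    obtain ⟨C, hC0, hC⟩ := g_mellin_strip hφ γ k a b hab
    exact ⟨C, hC0, fun m s h1 h2 _ => by simpa using hC m s h1 h2⟩
  | succ j ih =>
    intro γ k a b hab
    obtain ⟨C, hC0, hC⟩ := ih γ (k + 1) (a + 1) (b + 1) (by linarith)
    refine ⟨C, hC0, fun m s h1 h2 him => ?_⟩
    have hs0 : s ≠ 0 := by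
      intro h
      rw [h] at him
      simp at him
      linarith
    have hibp := g_mellin_ibp hφ γ m k hs0
    have hnorm : ‖mellin (g φ γ m k) s‖ = ‖mellin (g φ γ m (k + 1)) (s + 1)‖ / ‖s‖ := by
      rw [hibp, norm_mul, norm_neg, norm_div, norm_one]
      ring
    have hIH : ‖mellin (g φ γ m (k + 1)) (s + 1)‖ * |s.im| ^ j ≤ C := by
      have h := hC m (s + 1) (by simp [Complex.add_re]; linarith)
        (by simp [Complex.add_re]; linarith) (by simp [Complex.add_im]; exact him)
      simpa [Complex.add_im] using h
    have habs : |s.im| ≤ ‖s‖ := by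
      exact Complex.abs_im_le_norm s
    have hns : (0:ℝ) < ‖s‖ := lt_of_lt_of_le (lt_of_lt_of_le one_pos him) habs
    have hdiv : |s.im| / ‖s‖ ≤ 1 := (div_le_one hns).mpr habs
    calc ‖mellin (g φ γ m k) s‖ * |s.im| ^ (j + 1)
        = (‖mellin (g φ γ m (k + 1)) (s + 1)‖ * |s.im| ^ j) * (|s.im| / ‖s‖) := by
          rw [hnorm, pow_succ]
          ring
      _ ≤ C * 1 := by
          apply mul_le_mul hIH hdiv (by positivity) hC0
      _ = C := mul_one C

/-- One integration by parts in `θ` at the level of the Mellin transform. -/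
lemma g_mellin_theta {φ : ℂ → ℂ} (hφ : SchwartzCx φ) (γ : ℕ) (m : ℤ) (s : ℂ) :
    mellin (g φ (γ + 1) m 0) s = (-((m : ℂ) * Complex.I)) * mellin (g φ γ m 0) s := by
  rw [mellin, mellin, ← smul_eq_mul, ← MeasureTheory.integral_smul]
  apply setIntegral_congr_fun measurableSet_Ioi
  intro x hx
  simp only [smul_eq_mul]
  rw [g_theta_ibp hφ γ m hx]
  ring

lemma g_mellin_theta_pow {φ : ℂ → ℂ} (hφ : SchwartzCx φ) (A : ℕ) (m : ℤ) (s : ℂ) :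
    ‖mellin (g φ A m 0) s‖ = |(m : ℝ)| ^ A * ‖mellin (g φ 0 m 0) s‖ := by
  induction A with
  | zero => simp
  | succ A ih =>
    rw [g_mellin_theta hφ A m s, norm_mul, ih, norm_neg, norm_mul]
    have h1 : ‖(m : ℂ)‖ = |(m : ℝ)| := by
      exact Complex.norm_intCast m
    rw [h1, Complex.norm_I, mul_one, pow_succ]
    ring

/-- Combined bound with `(1 + |Im s|)` decay, for a fixed `γ`. -/
lemma g_mellin_combined {φ : ℂ → ℂ} (hφ : SchwartzCx φ) (γ α : ℕ) (a b : ℝ) (hab : a ≤ b) :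
    ∃ K : ℝ, 0 ≤ K ∧ ∀ (m : ℤ) (s : ℂ), a ≤ s.re → s.re ≤ b →
      ‖mellin (g φ γ m 0) s‖ * (1 + |s.im|) ^ α ≤ K := by
  obtain ⟨C₁, hC₁0, hC₁⟩ := g_mellin_decay hφ α γ 0 a b hab
  obtain ⟨C₂, hC₂0, hC₂⟩ := g_mellin_strip hφ γ 0 a b hab
  refine ⟨2 ^ α * max C₁ C₂, by positivity, fun m s h1 h2 => ?_⟩
  rcases le_or_gt 1 |s.im| with him | him
  · have key := hC₁ m s h1 h2 him
    have hb : (1 + |s.im|) ^ α ≤ 2 ^ α * |s.im| ^ α := by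
      rw [← mul_pow]
      apply pow_le_pow_left₀ (by positivity)
      linarith
    calc ‖mellin (g φ γ m 0) s‖ * (1 + |s.im|) ^ α
        ≤ ‖mellin (g φ γ m 0) s‖ * (2 ^ α * |s.im| ^ α) :=
          mul_le_mul_of_nonneg_left hb (norm_nonneg _)
      _ = 2 ^ α * (‖mellin (g φ γ m 0) s‖ * |s.im| ^ α) := by ring
      _ ≤ 2 ^ α * C₁ := mul_le_mul_of_nonneg_left key (by positivity)
      _ ≤ 2 ^ α * max C₁ C₂ := by
          apply mul_le_mul_of_nonneg_left (le_max_left _ _) (by positivity)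
  · have key := hC₂ m s h1 h2
    have hb : (1 + |s.im|) ^ α ≤ 2 ^ α := by
      apply pow_le_pow_left₀ (by positivity)
      linarith
    calc ‖mellin (g φ γ m 0) s‖ * (1 + |s.im|) ^ α
        ≤ C₂ * 2 ^ α := mul_le_mul key hb (by positivity) hC₂0
      _ ≤ 2 ^ α * max C₁ C₂ := by
          rw [mul_comm]
          apply mul_le_mul_of_nonneg_left (le_max_right _ _) (by positivity)


lemma inner_eq (φ : ℂ → ℂ) (m : ℤ) (x : ℝ) :
    (∫ θ in (0:ℝ)..(2 * π),
      φ ((x : ℂ) * Complex.exp ((θ : ℂ) * Complex.I)) *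
        Complex.exp ((m : ℂ) * (θ : ℂ) * Complex.I)) = g φ 0 m 0 x := by
  rw [g]
  apply intervalIntegral.integral_congr
  intro θ _
  simp [Dx, Phi]

lemma integrand_eq (φ : ℂ → ℂ) (m : ℤ) (s : ℂ) :
    (fun x : ℝ =>
      (∫ θ in (0:ℝ)..(2 * π),
        φ ((x : ℂ) * Complex.exp ((θ : ℂ) * Complex.I)) *
          Complex.exp ((m : ℂ) * (θ : ℂ) * Complex.I)) * (x : ℂ) ^ (s - 1))
      = fun x : ℝ => (x : ℂ) ^ (s - 1) • g φ 0 m 0 x := by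
  funext x
  rw [inner_eq, smul_eq_mul, mul_comm]

lemma mellinCx_eq (φ : ℂ → ℂ) (m : ℤ) (s : ℂ) :
    mellinCx φ m s = 2 * mellin (g φ 0 m 0) s := by
  rw [mellinCx, mellin]
  congr 1
  apply MeasureTheory.integral_congr_ae
  filter_upwards with x
  have := congrFun (integrand_eq φ m s) x
  exact this

end Stmt7

open Stmt7 in
/-- For `φ` Schwartz on `ℂ^×`, each `𝓜_m φ` converges absolutely, is entire,
and decays rapidly both in `|Im s|` (uniformly on vertical strips) and in `|m|`. -/
theorem stmt_7 (φ : ℂ → ℂ) (hφ : SchwartzCx φ) :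
    (∀ (m : ℤ) (s : ℂ), IntegrableOn
        (fun x : ℝ =>
          (∫ θ in (0 : ℝ)..(2 * π),
            φ ((x : ℂ) * Complex.exp ((θ : ℂ) * Complex.I)) *
              Complex.exp ((m : ℂ) * (θ : ℂ) * Complex.I)) * (x : ℂ) ^ (s - 1))
        (Set.Ioi 0)) ∧
      (∀ m : ℤ, Differentiable ℂ (mellinCx φ m)) ∧
      (∀ (α A : ℕ) (a b : ℝ), a ≤ b → ∃ C > 0, ∀ (m : ℤ) (s : ℂ), a ≤ s.re → s.re ≤ b →
        ‖mellinCx φ m s‖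
          ≤ C * (1 + |(m : ℝ)|) ^ (-(A : ℝ)) * (1 + |s.im|) ^ (-(α : ℝ))) := by
  refine ⟨?_, ?_, ?_⟩
  · intro m s
    rw [integrand_eq φ m s]
    exact g_mellinConv hφ 0 m 0 s
  · intro m
    have heq : mellinCx φ m = fun s => 2 * mellin (g φ 0 m 0) s :=
      funext fun s => mellinCx_eq φ m s
    rw [heq]
    exact fun s => (g_mellin_diff hφ 0 m 0 s).const_mul 2
  · intro α A a b hab
    obtain ⟨K, hK0, hK⟩ := g_mellin_combined hφ A α a b hab
    obtain ⟨K', hK'0, hK'⟩ := g_mellin_combined hφ 0 α a b hab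
    refine ⟨2 * 2 ^ A * (K + K') + 1, by positivity, fun m s h1 h2 => ?_⟩
    have hQpos : (0:ℝ) < (1 + |s.im|) ^ α := by positivity
    have hPpos : (0:ℝ) < (1 + |(m:ℝ)|) ^ A := by positivity
    -- main bound : ‖mellin (g 0 m 0) s‖ * (1+|m|)^A * (1+|im|)^α ≤ 2^A * (K + K')
    have main : ‖mellin (g φ 0 m 0) s‖ * ((1 + |(m:ℝ)|) ^ A * (1 + |s.im|) ^ α)
        ≤ 2 ^ A * (K + K') := by
      rcases eq_or_ne m 0 with hm | hm
      · subst hm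
        have := hK' 0 s h1 h2
        simp only [Int.cast_zero, abs_zero, add_zero, one_pow]
        calc ‖mellin (g φ 0 0 0) s‖ * (1 * (1 + |s.im|) ^ α)
            = ‖mellin (g φ 0 0 0) s‖ * (1 + |s.im|) ^ α := by ring
          _ ≤ K' := this
          _ ≤ 2 ^ A * (K + K') := by
              have h2A : (1:ℝ) ≤ 2 ^ A := one_le_pow₀ (by norm_num)
              nlinarith
      · have hm1 : (1:ℝ) ≤ |(m:ℝ)| := by
          have h0 : (1:ℤ) ≤ |m| := Int.one_le_abs (by exact_mod_cast hm)
          have h1' : (1:ℝ) ≤ ((|m| : ℤ) : ℝ) := by exact_mod_cast h0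
          rwa [Int.cast_abs] at h1'
        have hP : (1 + |(m:ℝ)|) ^ A ≤ 2 ^ A * |(m:ℝ)| ^ A := by
          rw [← mul_pow]
          apply pow_le_pow_left₀ (by positivity)
          linarith
        have htheta := g_mellin_theta_pow hφ A m s
        have hKey := hK m s h1 h2
        rw [htheta] at hKey
        -- hKey : |m|^A * ‖mellin (g 0 m 0) s‖ * (1+|im|)^α ≤ K
        calc ‖mellin (g φ 0 m 0) s‖ * ((1 + |(m:ℝ)|) ^ A * (1 + |s.im|) ^ α)
            ≤ ‖mellin (g φ 0 m 0) s‖ * ((2 ^ A * |(m:ℝ)| ^ A) * (1 + |s.im|) ^ α) := by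
              apply mul_le_mul_of_nonneg_left ?_ (norm_nonneg _)
              exact mul_le_mul_of_nonneg_right hP hQpos.le
          _ = 2 ^ A * (|(m:ℝ)| ^ A * ‖mellin (g φ 0 m 0) s‖ * (1 + |s.im|) ^ α) := by ring
          _ ≤ 2 ^ A * K := mul_le_mul_of_nonneg_left hKey (by positivity)
          _ ≤ 2 ^ A * (K + K') := by
              have h2A : (0:ℝ) < 2 ^ A := by positivity
              nlinarith
    -- convert to the stated form
    rw [mellinCx_eq φ m s]
    have hrw : (1 + |(m:ℝ)|) ^ (-(A:ℝ)) * (1 + |s.im|) ^ (-(α:ℝ))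
        = (((1 + |(m:ℝ)|) ^ A) * ((1 + |s.im|) ^ α))⁻¹ := by
      rw [Real.rpow_neg (by positivity), Real.rpow_neg (by positivity),
        Real.rpow_natCast, Real.rpow_natCast, mul_inv]
    have habs : ‖2 * mellin (g φ 0 m 0) s‖ = 2 * ‖mellin (g φ 0 m 0) s‖ := by
      rw [norm_mul]
      simp
    rw [habs, mul_assoc, hrw, ← div_eq_mul_inv, le_div_iff₀ (by positivity)]
    calc 2 * ‖mellin (g φ 0 m 0) s‖ * ((1 + |(m:ℝ)|) ^ A * (1 + |s.im|) ^ α)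
        ≤ 2 * (2 ^ A * (K + K')) := by
          rw [mul_assoc]
          exact mul_le_mul_of_nonneg_left main (by norm_num)
      _ ≤ 2 * 2 ^ A * (K + K') + 1 := by ring_nf; linarith
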